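/- arXiv:2507.20396 — 2 statements merged into one kernel-verified Lean document; each statement's English description precedes it below -/
import Mathlib

section
/- Let α₁, α₂ : [0,τ] → (0,∞) and q₁, q₂ : [0,∞) → (0,∞) be continuous with q₁, q₂ Lipschitz, and let β ∈ ℝ^d. Suppose that for all x in a set X and all t ∈ [0,τ], the solutions of μ' = αᵢ(t)exp(xᵀβ)qᵢ(μ), μ(0)=0 coincide. If additionally α₁(t₀) = α₂(t₀) = 1 for some t₀ ∈ (0,τ), the set {xᵀβ : x ∈ X} has nonempty interior, then α₁ = α₂ on [0,τ] and q₁ = q₂ on the common range of the solutions. -/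
open Real Set Matrix

/-- Identifiability of `(α, q)` in the general linear transformation
ODE model under the normalization `α(t₀) = 1`, provided the linear predictor
varies over a set with nonempty interior. -/
theorem ode_model_identifiability
    (d : ℕ) (τ : ℝ) (hτ : 0 < τ) (α₁ α₂ q₁ q₂ : ℝ → ℝ)
    (hα₁_cont : ContinuousOn α₁ (Icc 0 τ)) (hα₁_pos : ∀ t ∈ Icc (0:ℝ) τ, 0 < α₁ t)
    (hα₂_cont : ContinuousOn α₂ (Icc 0 τ)) (hα₂_pos : ∀ t ∈ Icc (0:ℝ) τ, 0 < α₂ t)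
    (hq₁_cont : Continuous q₁) (hq₁_pos : ∀ u, 0 < q₁ u)
    (hq₂_cont : Continuous q₂) (hq₂_pos : ∀ u, 0 < q₂ u)
    (hq₁_lip : ∃ L : NNReal, LipschitzWith L q₁)
    (hq₂_lip : ∃ L : NNReal, LipschitzWith L q₂)
    (β : Fin d → ℝ) (X : Set (Fin d → ℝ))
    (μ : (Fin d → ℝ) → ℝ → ℝ)
    (hμ0 : ∀ x ∈ X, μ x 0 = 0)
    (hμ₁ : ∀ x ∈ X, ∀ t ∈ Icc (0:ℝ) τ,
      HasDerivWithinAt (μ x) (α₁ t * Real.exp (x ⬝ᵥ β) * q₁ (μ x t)) (Icc 0 τ) t)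
    (hμ₂ : ∀ x ∈ X, ∀ t ∈ Icc (0:ℝ) τ,
      HasDerivWithinAt (μ x) (α₂ t * Real.exp (x ⬝ᵥ β) * q₂ (μ x t)) (Icc 0 τ) t)
    (t₀ : ℝ) (ht₀ : t₀ ∈ Ioo (0:ℝ) τ) (hnorm₁ : α₁ t₀ = 1) (hnorm₂ : α₂ t₀ = 1)
    (hint : (interior {v : ℝ | ∃ x ∈ X, x ⬝ᵥ β = v}).Nonempty) :
    (∀ t ∈ Icc (0:ℝ) τ, α₁ t = α₂ t) ∧
      ∀ u ∈ ⋃ x ∈ X, μ x '' Icc (0:ℝ) τ, q₁ u = q₂ u := by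
  obtain ⟨v, hv⟩ := hint
  rw [mem_interior_iff_mem_nhds, Metric.mem_nhds_iff] at hv
  obtain ⟨ε, hε, hball⟩ := hv
  -- the clamped extension of α₁
  set proj : ℝ → ℝ := fun t => max 0 (min τ t) with hproj_def
  have hprojmem : ∀ t, proj t ∈ Icc (0:ℝ) τ := fun t =>
    ⟨le_max_left _ _, max_le hτ.le (min_le_left _ _)⟩
  have hprojeq : ∀ t ∈ Icc (0:ℝ) τ, proj t = t := by
    intro t ht
    simp only [hproj_def]
    rw [min_eq_right ht.2, max_eq_right ht.1]
  set αe : ℝ → ℝ := fun t => α₁ (proj t) with hαe_def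
  have hαe_cont : Continuous αe :=
    hα₁_cont.comp_continuous (continuous_const.max (continuous_const.min continuous_id)) hprojmem
  have hαe_pos : ∀ t, 0 < αe t := fun t => hα₁_pos _ (hprojmem t)
  have hαe_eq : ∀ t ∈ Icc (0:ℝ) τ, αe t = α₁ t := by
    intro t ht; simp only [hαe_def]; rw [hprojeq t ht]
  -- the cumulative hazard A and the transformation F
  set A : ℝ → ℝ := fun t => ∫ s in (0:ℝ)..t, αe s with hA_def
  have hA_deriv : ∀ t, HasDerivAt A (αe t) t := fun t =>
    (hαe_cont.integral_hasStrictDerivAt 0 t).hasDerivAt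
  have hA0 : A 0 = 0 := intervalIntegral.integral_same
  have hA_cont : Continuous A :=
    continuous_iff_continuousAt.2 fun t => (hA_deriv t).continuousAt
  have hA_mono : StrictMonoOn A (Icc 0 τ) := by
    apply strictMonoOn_of_deriv_pos (convex_Icc 0 τ) hA_cont.continuousOn
    intro t _
    rw [(hA_deriv t).deriv]
    exact hαe_pos t
  have hq₁inv_cont : Continuous fun s => (q₁ s)⁻¹ :=
    hq₁_cont.inv₀ fun s => (hq₁_pos s).ne'
  set F : ℝ → ℝ := fun u => ∫ s in (0:ℝ)..u, (q₁ s)⁻¹ with hF_def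
  have hF_deriv : ∀ u, HasDerivAt F (q₁ u)⁻¹ u := fun u =>
    (hq₁inv_cont.integral_hasStrictDerivAt 0 u).hasDerivAt
  have hF0 : F 0 = 0 := intervalIntegral.integral_same
  have hF_mono : StrictMono F := by
    apply strictMono_of_deriv_pos
    intro u
    rw [(hF_deriv u).deriv]
    exact inv_pos.2 (hq₁_pos u)
  -- Step 1: pointwise identity from uniqueness of the derivative
  have hK : ∀ x ∈ X, ∀ t ∈ Icc (0:ℝ) τ, α₁ t * q₁ (μ x t) = α₂ t * q₂ (μ x t) := by
    intro x hx t ht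
    have h1 := (hμ₁ x hx t ht).derivWithin (uniqueDiffOn_Icc hτ t ht)
    have h2 := (hμ₂ x hx t ht).derivWithin (uniqueDiffOn_Icc hτ t ht)
    have h3 : α₁ t * Real.exp (x ⬝ᵥ β) * q₁ (μ x t)
        = α₂ t * Real.exp (x ⬝ᵥ β) * q₂ (μ x t) := by rw [← h1, ← h2]
    have he : Real.exp (x ⬝ᵥ β) ≠ 0 := (Real.exp_pos _).ne'
    have h4 : (α₁ t * q₁ (μ x t)) * Real.exp (x ⬝ᵥ β)
        = (α₂ t * q₂ (μ x t)) * Real.exp (x ⬝ᵥ β) := by linear_combination h3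
    exact mul_right_cancel₀ he h4
  -- Step 2: the time-change identity F (μ x t) = exp (x⬝β) * A t
  have hKI : ∀ x ∈ X, ∀ t ∈ Icc (0:ℝ) τ, F (μ x t) = Real.exp (x ⬝ᵥ β) * A t := by
    intro x hx
    set c := Real.exp (x ⬝ᵥ β) with hc_def
    have hφd : ∀ t ∈ Icc (0:ℝ) τ,
        HasDerivWithinAt (fun t => F (μ x t) - c * A t) 0 (Icc 0 τ) t := by
      intro t ht
      have h1 : HasDerivWithinAt (fun t => F (μ x t))
          ((q₁ (μ x t))⁻¹ * (α₁ t * c * q₁ (μ x t))) (Icc 0 τ) t :=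
        (hF_deriv (μ x t)).comp_hasDerivWithinAt t (hμ₁ x hx t ht)
      have hval : (q₁ (μ x t))⁻¹ * (α₁ t * c * q₁ (μ x t)) = c * α₁ t := by
        field_simp [(hq₁_pos (μ x t)).ne']
      rw [hval] at h1
      have h2 : HasDerivWithinAt (fun t => c * A t) (c * α₁ t) (Icc 0 τ) t := by
        have := ((hA_deriv t).hasDerivWithinAt (s := Icc 0 τ)).const_mul c
        rwa [hαe_eq t ht] at this
      have h3 := h1.sub h2; rw [sub_self] at h3; exact h3
    have hconst := constant_of_derivWithin_zero (a := 0) (b := τ)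
      (f := fun t => F (μ x t) - c * A t)
      (fun t ht => (hφd t ht).differentiableWithinAt)
      (fun t ht => (hφd t (mem_Icc_of_Ico ht)).derivWithin
        (uniqueDiffOn_Icc hτ t (mem_Icc_of_Ico ht)))
    intro t ht
    have h5 : F (μ x t) - c * A t = F (μ x 0) - c * A 0 := hconst t ht
    rw [hμ0 x hx, hF0, hA0, mul_zero, sub_zero] at h5
    linarith
  -- Step 3: equal solution values link the ratios α₁/α₂ at two times
  have hM : ∀ x ∈ X, ∀ y ∈ X, ∀ t ∈ Icc (0:ℝ) τ, ∀ t' ∈ Icc (0:ℝ) τ,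
      μ x t = μ y t' → α₁ t / α₂ t = α₁ t' / α₂ t' := by
    intro x hx y hy t ht t' ht' hμeq
    rw [div_eq_div_iff (hα₂_pos t ht).ne' (hα₂_pos t' ht').ne']
    have h1 := hK x hx t ht
    have h2 := hK y hy t' ht'
    rw [hμeq] at h1
    set u := μ y t' with hu_def
    have hq : q₁ u * q₂ u ≠ 0 := (mul_pos (hq₁_pos u) (hq₂_pos u)).ne'
    apply mul_right_cancel₀ hq
    linear_combination (α₂ t' * q₂ u) * h1 - (α₂ t * q₂ u) * h2
  -- Step 4: the elementary link using the interval of predictor values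
  have hκ₀pos : (0:ℝ) < Real.exp (-(ε / 2)) := Real.exp_pos _
  have hκ₀lt1 : Real.exp (-(ε / 2)) < 1 := Real.exp_lt_one_iff.2 (by linarith)
  have hL1 : ∀ t ∈ Icc (0:ℝ) τ, ∀ κ : ℝ, Real.exp (-(ε / 2)) ≤ κ → κ ≤ 1 →
      ∃ t' ∈ Icc (0:ℝ) τ, A t' = κ * A t ∧ α₁ t / α₂ t = α₁ t' / α₂ t' := by
    intro t ht κ hκ₁ hκ₂
    have hκpos : 0 < κ := lt_of_lt_of_le hκ₀pos hκ₁
    have hAt0 : 0 ≤ A t := by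
      have := hA_mono.monotoneOn ⟨le_rfl, hτ.le⟩ ht ht.1
      rwa [hA0] at this
    have hIVT : κ * A t ∈ A '' Icc 0 t := by
      apply intermediate_value_Icc ht.1 hA_cont.continuousOn
      constructor
      · rw [hA0]; exact mul_nonneg hκpos.le hAt0
      · nlinarith
    obtain ⟨t', ht'mem, hAt'⟩ := hIVT
    have ht'I : t' ∈ Icc (0:ℝ) τ := ⟨ht'mem.1, ht'mem.2.trans ht.2⟩
    obtain ⟨x, hxX, hxv⟩ := hball (Metric.mem_ball_self hε)
    have hyC : v - Real.log κ ∈ Metric.ball v ε := by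
      rw [Metric.mem_ball, Real.dist_eq]
      have h1 : Real.log κ ≤ 0 := Real.log_nonpos hκpos.le hκ₂
      have h2 : -(ε / 2) ≤ Real.log κ := by
        calc -(ε / 2) = Real.log (Real.exp (-(ε / 2))) := (Real.log_exp _).symm
          _ ≤ Real.log κ := (Real.log_le_log_iff hκ₀pos hκpos).2 hκ₁
      have h3 : v - Real.log κ - v = -Real.log κ := by ring
      rw [h3, abs_of_nonneg (by linarith)]
      linarith
    obtain ⟨y, hyX, hyv⟩ := hball hyC
    have hFeq : F (μ y t') = F (μ x t) := by
      rw [hKI x hxX t ht, hKI y hyX t' ht'I, hxv, hyv, hAt',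
        Real.exp_sub, Real.exp_log hκpos]
      field_simp
    have hμeq : μ x t = μ y t' := hF_mono.injective hFeq.symm
    exact ⟨t', ht'I, hAt', hM x hxX y hyX t ht t' ht'I hμeq⟩
  -- Step 5: chain the links
  have hL2 : ∀ n : ℕ, ∀ t ∈ Icc (0:ℝ) τ, ∀ ρ : ℝ, Real.exp (-(ε / 2)) ^ n ≤ ρ → ρ ≤ 1 →
      ∃ t' ∈ Icc (0:ℝ) τ, A t' = ρ * A t ∧ α₁ t / α₂ t = α₁ t' / α₂ t' := by
    intro n
    induction n with
    | zero =>
      intro t ht ρ h1 h2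
      have hρ : ρ = 1 := le_antisymm h2 (by simpa using h1)
      exact ⟨t, ht, by rw [hρ, one_mul], rfl⟩
    | succ n ih =>
      intro t ht ρ h1 h2
      by_cases hρ : Real.exp (-(ε / 2)) ≤ ρ
      · exact hL1 t ht ρ hρ h2
      · push_neg at hρ
        obtain ⟨t₁, ht₁, hA1, hlink1⟩ := hL1 t ht (Real.exp (-(ε / 2))) le_rfl hκ₀lt1.le
        have hd1 : Real.exp (-(ε / 2)) ^ n ≤ ρ / Real.exp (-(ε / 2)) := by
          rw [le_div_iff₀ hκ₀pos]
          calc Real.exp (-(ε / 2)) ^ n * Real.exp (-(ε / 2))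
              = Real.exp (-(ε / 2)) ^ (n + 1) := by ring
            _ ≤ ρ := h1
        have hd2 : ρ / Real.exp (-(ε / 2)) ≤ 1 := (div_le_one hκ₀pos).2 hρ.le
        obtain ⟨t', ht', hA2, hlink2⟩ := ih t₁ ht₁ (ρ / Real.exp (-(ε / 2))) hd1 hd2
        refine ⟨t', ht', ?_, hlink1.trans hlink2⟩
        rw [hA2, hA1]
        field_simp
  -- Step 6: the ratio α₁/α₂ is constant wherever A is positive
  have hlink : ∀ t ∈ Icc (0:ℝ) τ, ∀ t' ∈ Icc (0:ℝ) τ, 0 < A t' → A t' ≤ A t →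
      α₁ t / α₂ t = α₁ t' / α₂ t' := by
    intro t ht t' ht' hpos hle
    have hAt : 0 < A t := lt_of_lt_of_le hpos hle
    have hρpos : 0 < A t' / A t := div_pos hpos hAt
    have hρ1 : A t' / A t ≤ 1 := (div_le_one hAt).2 hle
    obtain ⟨n, hn⟩ := exists_pow_lt_of_lt_one hρpos hκ₀lt1
    obtain ⟨t'', ht'', hA'', hlk⟩ := hL2 n t ht (A t' / A t) hn.le hρ1
    have hAeq : A t'' = A t' := by rw [hA'']; field_simp
    have : t'' = t' := hA_mono.injOn ht'' ht' hAeq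
    rw [← this]
    exact hlk
  -- Step 7: α₁ = α₂ on (0, τ]
  have hApos : ∀ s ∈ Ioc (0:ℝ) τ, 0 < A s := by
    intro s hs
    have := hA_mono ⟨le_rfl, hτ.le⟩ ⟨hs.1.le, hs.2⟩ hs.1
    rwa [hA0] at this
  have ht₀I : t₀ ∈ Icc (0:ℝ) τ := ⟨ht₀.1.le, ht₀.2.le⟩
  have hαIoc : ∀ t ∈ Ioc (0:ℝ) τ, α₁ t = α₂ t := by
    intro t ht
    have htI : t ∈ Icc (0:ℝ) τ := ⟨ht.1.le, ht.2⟩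
    have hratio : α₁ t / α₂ t = α₁ t₀ / α₂ t₀ := by
      rcases le_total (A t) (A t₀) with h | h
      · exact (hlink t₀ ht₀I t htI (hApos t ht) h).symm
      · exact hlink t htI t₀ ht₀I (hApos t₀ ⟨ht₀.1, ht₀.2.le⟩) h
    rw [hnorm₁, hnorm₂] at hratio
    have hα₂ne : α₂ t ≠ 0 := (hα₂_pos t htI).ne'
    field_simp at hratio
    exact hratio
  -- Step 8: α₁ 0 = α₂ 0 by continuity
  have hα0 : α₁ 0 = α₂ 0 := by
    have hne : ((nhdsWithin (0:ℝ) (Ioc 0 τ))).NeBot := by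
      rw [← mem_closure_iff_nhdsWithin_neBot, closure_Ioc hτ.ne]
      exact ⟨le_rfl, hτ.le⟩
    have h1 : Filter.Tendsto α₁ (nhdsWithin 0 (Ioc 0 τ)) (nhds (α₁ 0)) :=
      (hα₁_cont 0 ⟨le_rfl, hτ.le⟩).mono_left (nhdsWithin_mono _ Ioc_subset_Icc_self)
    have h2 : Filter.Tendsto α₂ (nhdsWithin 0 (Ioc 0 τ)) (nhds (α₂ 0)) :=
      (hα₂_cont 0 ⟨le_rfl, hτ.le⟩).mono_left (nhdsWithin_mono _ Ioc_subset_Icc_self)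
    have heq : α₁ =ᶠ[nhdsWithin 0 (Ioc 0 τ)] α₂ :=
      eventually_nhdsWithin_of_forall hαIoc
    exact tendsto_nhds_unique (h1.congr' heq) h2
  have hα : ∀ t ∈ Icc (0:ℝ) τ, α₁ t = α₂ t := by
    intro t ht
    rcases eq_or_lt_of_le ht.1 with h | h
    · rw [← h]; exact hα0
    · exact hαIoc t ⟨h, ht.2⟩
  refine ⟨hα, ?_⟩
  intro u hu
  simp only [mem_iUnion, mem_image] at hu
  obtain ⟨x, hx, t, ht, rfl⟩ := hu
  have h := hK x hx t ht
  rw [hα t ht] at h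
  exact mul_left_cancel₀ (hα₂_pos t ht).ne' h
end

section
/- Let α : [0,τ] → (0,∞) and q : [0,∞) → (0,∞) be continuous with q Lipschitz with constant L_q and bounded above by M_q, and suppose |xᵀβ| ≤ B. Let μ_x solve μ'_x = α(t)exp(xᵀβ)q(μ_x), μ_x(0)=0. Then for all t ∈ [0,τ], μ_x(t) ≤ e^B·M_q·∫₀ᵗ α(s)ds; moreover, the map (t,v) ↦ μ(t,v) (the solution with linear predictor v = xᵀβ) is Lipschitz continuous in v on [−B,B], uniformly in t ∈ [0,τ]. -/
open Real Set

lemma gb_aux (K : NNReal) (ε x T : ℝ) (hε : 0 ≤ ε) (hx : 0 ≤ x) (hxT : x ≤ T) :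
    gronwallBound 0 (K:ℝ) ε x ≤ ε * (T * Real.exp (K * T)) := by
  have hT : 0 ≤ T := hx.trans hxT
  have hE : 0 < Real.exp ((K:ℝ) * T) := Real.exp_pos _
  by_cases hK : (K:ℝ) = 0
  · rw [hK]
    rw [show gronwallBound 0 0 ε = fun x => 0 + ε * x from gronwallBound_K0 0 ε]
    simp only
    have h1 : Real.exp (0 * T) = 1 := by norm_num
    rw [h1]
    nlinarith [mul_le_mul_of_nonneg_left hxT hε]
  · have hKpos : (0:ℝ) < K := lt_of_le_of_ne K.coe_nonneg (Ne.symm hK)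
    rw [show gronwallBound 0 (K:ℝ) ε = fun x => 0 * Real.exp ((K:ℝ)*x) + ε/K * (Real.exp ((K:ℝ)*x) - 1) from gronwallBound_of_K_ne_0 hK]
    simp only [zero_mul, zero_add]
    have h2 : Real.exp ((K:ℝ)*x) ≤ Real.exp ((K:ℝ)*T) := by
      apply Real.exp_le_exp.2
      exact mul_le_mul_of_nonneg_left hxT K.coe_nonneg
    have h3 : (1 - (K:ℝ)*T) * Real.exp ((K:ℝ)*T) ≤ 1 := by
      have h := Real.add_one_le_exp (-((K:ℝ)*T))
      rw [Real.exp_neg] at h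
      have := mul_le_mul_of_nonneg_right h hE.le
      rw [inv_mul_cancel₀ hE.ne'] at this
      linarith
    rw [div_mul_eq_mul_div, div_le_iff₀ hKpos]
    nlinarith

/-- Uniform bound and Lipschitz dependence on the linear predictor
for solutions of `μ' = α(t) e^v q(μ)`, `μ(0)=0`, with `|v| ≤ B`. -/
theorem ode_solution_bounded_and_lipschitz_in_predictor
    (τ B Mq Lq : ℝ) (hτ : 0 < τ) (hB : 0 ≤ B)
    (α q : ℝ → ℝ)
    (hα_cont : ContinuousOn α (Icc 0 τ)) (hα_pos : ∀ t ∈ Icc (0:ℝ) τ, 0 < α t)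
    (hq_cont : Continuous q) (hq_pos : ∀ u, 0 < q u)
    (hq_bdd : ∀ u, q u ≤ Mq)
    (hq_lip : LipschitzWith (Real.toNNReal Lq) q)
    (μ : ℝ → ℝ → ℝ)
    (hμ0 : ∀ v ∈ Icc (-B) B, μ v 0 = 0)
    (hμ : ∀ v ∈ Icc (-B) B, ∀ t ∈ Icc (0:ℝ) τ,
      HasDerivWithinAt (μ v) (α t * Real.exp v * q (μ v t)) (Icc 0 τ) t) :
    (∀ v ∈ Icc (-B) B, ∀ t ∈ Icc (0:ℝ) τ,
        μ v t ≤ Real.exp B * Mq * ∫ s in (0:ℝ)..t, α s) ∧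
      ∃ Lv : ℝ, 0 ≤ Lv ∧
        ∀ v₁ ∈ Icc (-B) B, ∀ v₂ ∈ Icc (-B) B, ∀ t ∈ Icc (0:ℝ) τ,
          |μ v₁ t - μ v₂ t| ≤ Lv * |v₁ - v₂| := by
  have hMq0 : 0 < Mq := lt_of_lt_of_le (hq_pos 0) (hq_bdd 0)
  -- primitive of α
  set I : ℝ → ℝ := fun t => ∫ s in (0:ℝ)..t, α s with hI
  have hIcont : ContinuousOn I (Icc 0 τ) := by
    have hint : MeasureTheory.IntegrableOn α (uIcc 0 τ) := by
      rw [uIcc_of_le hτ.le]; exact hα_cont.integrableOn_Icc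
    have := intervalIntegral.continuousOn_primitive_interval hint
    rwa [uIcc_of_le hτ.le] at this
  have hIderiv : ∀ t' ∈ Ioo (0:ℝ) τ, HasDerivAt I (α t') t' := by
    intro t' ht'
    have hti : IntervalIntegrable α MeasureTheory.volume 0 t' := by
      apply ContinuousOn.intervalIntegrable
      apply hα_cont.mono
      rw [uIcc_of_le ht'.1.le]
      exact Icc_subset_Icc le_rfl ht'.2.le
    refine intervalIntegral.integral_hasDerivAt_right hti ?_ ?_
    · exact ⟨Ioo 0 τ, Ioo_mem_nhds ht'.1 ht'.2,
        (hα_cont.mono Ioo_subset_Icc_self).aestronglyMeasurable measurableSet_Ioo⟩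
    · exact hα_cont.continuousAt (Icc_mem_nhds ht'.1 ht'.2)
  constructor
  · -- boundedness
    intro v hv t ht
    have hmono : MonotoneOn (fun s => Real.exp B * Mq * I s - μ v s) (Icc 0 τ) := by
      apply monotoneOn_of_hasDerivWithinAt_nonneg (convex_Icc 0 τ)
        (f' := fun s => Real.exp B * Mq * α s - α s * Real.exp v * q (μ v s))
      · exact (continuousOn_const.mul hIcont).sub
          (fun s hs => (hμ v hv s hs).continuousWithinAt)
      · intro s hs
        rw [interior_Icc] at hs
        rw [interior_Icc]
        exact (((hIderiv s hs).hasDerivWithinAt.const_mul _).sub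
          ((hμ v hv s (Ioo_subset_Icc_self hs)).mono Ioo_subset_Icc_self))
      · intro s hs
        rw [interior_Icc] at hs
        have hαs := hα_pos s (Ioo_subset_Icc_self hs)
        have hev : Real.exp v ≤ Real.exp B := Real.exp_le_exp.2 hv.2
        have h1 : Real.exp v * q (μ v s) ≤ Real.exp B * Mq :=
          mul_le_mul hev (hq_bdd _) (hq_pos _).le (Real.exp_pos B).le
        nlinarith [mul_le_mul_of_nonneg_left h1 hαs.le]
    have h0 : (0:ℝ) ∈ Icc (0:ℝ) τ := ⟨le_refl 0, hτ.le⟩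
    have := hmono h0 ht ht.1
    have hI0 : I 0 = 0 := intervalIntegral.integral_same
    have hμ00 : μ v 0 = 0 := hμ0 v hv
    simp only [hI0, hμ00] at this
    linarith
  · -- Lipschitz dependence on v
    obtain ⟨A, hA⟩ := isCompact_Icc.exists_bound_of_continuousOn hα_cont
    have hA0 : 0 ≤ A := le_trans (norm_nonneg _) (hA 0 ⟨le_refl 0, hτ.le⟩)
    set Lq' : ℝ := (Real.toNNReal Lq : ℝ) with hLq'
    have hLq'0 : 0 ≤ Lq' := (Real.toNNReal Lq).coe_nonneg
    set K : NNReal := Real.toNNReal (A * Real.exp B * Lq') with hKdef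
    have hKcoe : (K:ℝ) = A * Real.exp B * Lq' := by
      rw [hKdef, Real.coe_toNNReal]
      positivity
    set C : ℝ := A * Mq * Real.exp B with hC
    have hC0 : 0 ≤ C := by positivity
    refine ⟨C * (τ * Real.exp ((K:ℝ) * τ)), by positivity, ?_⟩
    intro v₁ hv₁ v₂ hv₂ t ht
    -- exp is Lipschitz on [-B, B]
    have hexp : ∀ a ∈ Icc (-B) B, ∀ b ∈ Icc (-B) B,
        |Real.exp a - Real.exp b| ≤ Real.exp B * |a - b| := by
      intro a ha b hb
      have := (convex_Icc (-B) B).norm_image_sub_le_of_norm_hasDerivWithin_le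
        (f := Real.exp) (f' := Real.exp) (C := Real.exp B)
        (fun x _ => (Real.hasDerivAt_exp x).hasDerivWithinAt)
        (fun x hx => by
          rw [Real.norm_eq_abs, abs_of_pos (Real.exp_pos x)]
          exact Real.exp_le_exp.2 hx.2) hb ha
      simpa [Real.norm_eq_abs] using this
    -- the vector field (clamped outside [0,τ])
    set w : ℝ → ℝ → ℝ :=
      fun s y => (if s ∈ Icc (0:ℝ) τ then α s else 0) * Real.exp v₁ * q y with hw
    have hlip : ∀ s, LipschitzWith K (w s) := by
      intro s
      apply LipschitzWith.of_dist_le_mul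
      intro y₁ y₂
      have hc : |if s ∈ Icc (0:ℝ) τ then α s else 0| ≤ A := by
        split
        · simpa using hA s ‹_›
        · simpa using hA0
      have hqd : |q y₁ - q y₂| ≤ Lq' * |y₁ - y₂| := by
        have := hq_lip.dist_le_mul y₁ y₂
        simpa [Real.dist_eq, hLq'] using this
      have hev : Real.exp v₁ ≤ Real.exp B := Real.exp_le_exp.2 hv₁.2
      rw [Real.dist_eq, Real.dist_eq, hKcoe]
      have hre : w s y₁ - w s y₂
          = ((if s ∈ Icc (0:ℝ) τ then α s else 0) * Real.exp v₁) * (q y₁ - q y₂) := by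
        simp only [hw]; ring
      rw [hre, abs_mul, abs_mul, abs_of_pos (Real.exp_pos v₁)]
      calc |if s ∈ Icc (0:ℝ) τ then α s else 0| * Real.exp v₁ * |q y₁ - q y₂|
          ≤ (A * Real.exp B) * (Lq' * |y₁ - y₂|) := by
            apply mul_le_mul _ hqd (abs_nonneg _) (by positivity)
            exact mul_le_mul hc hev (Real.exp_pos v₁).le hA0
        _ = A * Real.exp B * Lq' * |y₁ - y₂| := by ring
    have hgron := dist_le_of_approx_trajectories_ODE (v := w) hlip
      (f := μ v₁) (f' := fun s => α s * Real.exp v₁ * q (μ v₁ s))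
      (g := μ v₂) (g' := fun s => α s * Real.exp v₂ * q (μ v₂ s))
      (a := 0) (b := τ) (εf := 0) (εg := C * |v₁ - v₂|) (δ := 0)
      (fun s hs => (hμ v₁ hv₁ s hs).continuousWithinAt)
      (fun s hs => (hμ v₁ hv₁ s (Ico_subset_Icc_self hs)).mono_of_mem_nhdsWithin
        (Icc_mem_nhdsGE_of_mem hs))
      (by
        intro s hs
        have : w s (μ v₁ s) = α s * Real.exp v₁ * q (μ v₁ s) := by
          simp only [hw, if_pos (Ico_subset_Icc_self hs)]
        rw [this, dist_self])
      (fun s hs => (hμ v₂ hv₂ s hs).continuousWithinAt)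
      (fun s hs => (hμ v₂ hv₂ s (Ico_subset_Icc_self hs)).mono_of_mem_nhdsWithin
        (Icc_mem_nhdsGE_of_mem hs))
      (by
        intro s hs
        have hws : w s (μ v₂ s) = α s * Real.exp v₁ * q (μ v₂ s) := by
          simp only [hw, if_pos (Ico_subset_Icc_self hs)]
        rw [hws, Real.dist_eq]
        have h1 : |α s| ≤ A := by simpa using hA s (Ico_subset_Icc_self hs)
        have h2 : |q (μ v₂ s)| ≤ Mq := by
          rw [abs_of_pos (hq_pos _)]; exact hq_bdd _
        have h3 : |Real.exp v₂ - Real.exp v₁| ≤ Real.exp B * |v₂ - v₁| :=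
          hexp v₂ hv₂ v₁ hv₁
        have hre : α s * Real.exp v₂ * q (μ v₂ s) - α s * Real.exp v₁ * q (μ v₂ s)
            = (α s * q (μ v₂ s)) * (Real.exp v₂ - Real.exp v₁) := by ring
        rw [hre, abs_mul, abs_mul]
        calc |α s| * |q (μ v₂ s)| * |Real.exp v₂ - Real.exp v₁|
            ≤ (A * Mq) * (Real.exp B * |v₂ - v₁|) := by
              apply mul_le_mul _ h3 (abs_nonneg _) (by positivity)
              exact mul_le_mul h1 h2 (abs_nonneg _) hA0
          _ = C * |v₁ - v₂| := by rw [abs_sub_comm]; ring)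
      (by rw [hμ0 v₁ hv₁, hμ0 v₂ hv₂, dist_self])
      t ht
    rw [zero_add, sub_zero] at hgron
    have hgb := gb_aux K (C * |v₁ - v₂|) t τ (by positivity) ht.1 ht.2
    rw [Real.dist_eq] at hgron
    calc |μ v₁ t - μ v₂ t| ≤ gronwallBound 0 (K:ℝ) (C * |v₁ - v₂|) t := hgron
      _ ≤ (C * |v₁ - v₂|) * (τ * Real.exp ((K:ℝ) * τ)) := hgb
      _ = C * (τ * Real.exp ((K:ℝ) * τ)) * |v₁ - v₂| := by ring
end
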